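/- arXiv:0803.1387 — 2 statements merged into one kernel-verified Lean document; each statement's English description precedes it below -/
import Mathlib

section
/- Let X be a locally compact, perfect, separable metric space and f : X → X a homeomorphism. If the product f × f : X × X → X × X is pseudo-minimal, then X consists of a single point. -/
/-!
Pick `(v, w)` in the open set `U` of points with dense orbit. Since that orbit is dense, some
iterate `fⁿ v` is so close to `w` that `(v, fⁿ v)` still lies in `U`. But the orbit of
`(v, fⁿ v)` under `f × f` stays on the graph of the continuous map `fⁿ`, which is closed;
a dense orbit forces this graph to be all of `X × X`, so `X` has at most one point.
-/

open Topology

/-- A homeomorphism is pseudo-minimal if some nonempty open set consists of points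
with dense (two-sided) orbit. -/
def IsPseudoMinimal {Z : Type*} [TopologicalSpace Z] (h : Z ≃ₜ Z) : Prop :=
  ∃ U : Set Z, IsOpen U ∧ U.Nonempty ∧
    ∀ z ∈ U, Dense (Set.range fun n : ℤ => (h.toEquiv ^ n) z)

namespace Homeomorph

def toPermHom (X : Type*) [TopologicalSpace X] : (X ≃ₜ X) →* Equiv.Perm X where
  toFun := Homeomorph.toEquiv
  map_one' := rfl
  map_mul' _ _ := rfl

theorem continuous_toEquiv_zpow {X : Type*} [TopologicalSpace X] (f : X ≃ₜ X) (n : ℤ) :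
    Continuous ⇑(f.toEquiv ^ n) := by
  rw [← show (f ^ n).toEquiv = f.toEquiv ^ n from map_zpow (toPermHom X) f n]
  exact (f ^ n).continuous

end Homeomorph

namespace Equiv.Perm

variable {α β : Type*}

def prodCongrHom (α β : Type*) : Perm α × Perm β →* Perm (α × β) where
  toFun σ := σ.1.prodCongr σ.2
  map_one' := rfl
  map_mul' _ _ := rfl

theorem prodCongr_zpow (σ : Perm α) (τ : Perm β) (n : ℤ) :
    σ.prodCongr τ ^ n = (σ ^ n).prodCongr (τ ^ n) :=
  (map_zpow (prodCongrHom α β) (σ, τ) n).symm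

theorem range_zpow_prodCongr_subset_graph (σ : Perm α) (x : α) (k : ℤ) :
    Set.range (fun n : ℤ => (σ.prodCongr σ ^ n) (x, (σ ^ k) x)) ⊆ {p | p.2 = (σ ^ k) p.1} := by
  rintro _ ⟨n, rfl⟩
  simp only [Set.mem_ofPred_eq, prodCongr_zpow, prodCongr_apply, Prod.map_fst, Prod.map_snd]
  exact zpow_apply_comm σ n k

theorem exists_zpow_mem_of_dense_orbit [TopologicalSpace α] (σ τ : Perm α) {U : Set (α × α)}
    (hU : IsOpen U) {v w : α} (hvw : (v, w) ∈ U)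
    (hdense : Dense (Set.range fun n : ℤ => (σ.prodCongr τ ^ n) (v, w))) :
    ∃ k : ℤ, (v, (σ ^ k) v) ∈ U := by
  obtain ⟨_, hmem, n, rfl⟩ := hdense.inter_open_nonempty ((fun p : α × α => (v, p.1)) ⁻¹' U)
    (hU.preimage (by fun_prop)) ⟨(w, w), hvw⟩
  exact ⟨n, by
    simpa only [prodCongr_zpow, prodCongr_apply, Set.mem_preimage, Prod.map_fst] using hmem⟩

end Equiv.Perm

theorem subsingleton_of_dense_subset_graph {X : Type*} [TopologicalSpace X] [T2Space X]
    {g : X → X} (hg : Continuous g) {S : Set (X × X)} (hS : Dense S)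
    (hSg : S ⊆ {p | p.2 = g p.1}) : Subsingleton X := by
  have hgraph : ∀ p : X × X, p.2 = g p.1 := fun p =>
    (isClosed_eq continuous_snd (hg.comp continuous_fst)).closure_subset_iff.mpr hSg (hS p)
  exact ⟨fun a b => (hgraph (a, a)).trans (hgraph (a, b)).symm⟩

theorem stmt6_general {X : Type*} [MetricSpace X] (f : X ≃ₜ X)
    (hpm : IsPseudoMinimal (f.prodCongr f)) : Subsingleton X := by
  obtain ⟨U, hUo, ⟨⟨v, w⟩, hvw⟩, hdense⟩ := hpm
  obtain ⟨k, hk⟩ := Equiv.Perm.exists_zpow_mem_of_dense_orbit _ _ hUo hvw (hdense _ hvw)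
  exact subsingleton_of_dense_subset_graph (f.continuous_toEquiv_zpow k) (hdense _ hk)
    (Equiv.Perm.range_zpow_prodCongr_subset_graph f.toEquiv v k)

/-- If `f × f` is pseudo-minimal on `X × X` then `X` is a single point. -/
theorem stmt6 {X : Type*} [MetricSpace X] [LocallyCompactSpace X]
    [SecondCountableTopology X] [PerfectSpace X] (f : X ≃ₜ X)
    (hpm : IsPseudoMinimal (f.prodCongr f)) : Subsingleton X :=
  stmt6_general f hpm
end

section
/- Let X be a locally compact, perfect, separable metric space and f : X → X a pseudo-minimal homeomorphism. Let X_M denote the set of points with dense orbit. If X_M is connected, then for every integer n ≥ 1 the restriction of f^n to X_M is minimal; i.e. for every x ∈ X_M, the orbit of x under f^n is dense in X. -/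
open Topology Pointwise

/-!
Let a group `G` act by homeomorphisms on a Baire space `X`, let `H` be a normal subgroup of finite
index, and write `E x` for the closure of the `H`-orbit of `x`. If `G • x` is dense, the finitely
many closed sets `g • E x` cover `X`, so `E x` has nonempty interior by Baire. Normality makes
`g • E x = E (g • x)`, and since `g ^ [G : H] ∈ H`, the inclusion `g • E x ⊆ E x` forces
`g • E x = E x`. Comparing `E x` and `E y` through a point of the dense orbit `G • x` lying in the
interior of `E y` then shows that `E x` is relatively open in the set `M` of points with dense
`G`-orbit; as it is closed, a preconnected `M` lies in `E x`, and `M ⊇ G • x` is dense.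
For a homeomorphism `f` take `G = ℤ` acting by powers of `f` and `H = nℤ`.
-/

@[to_additive]
theorem smul_set_eq_of_pow_smul_set_eq {M X : Type*} [Monoid M] [MulAction M X] {g : M}
    {s : Set X} {n : ℕ} (hn : n ≠ 0) (hsub : g • s ⊆ s) (hpow : g ^ n • s = s) : g • s = s := by
  have hpow_sub : ∀ k : ℕ, g ^ k • s ⊆ s := by
    intro k
    induction k with
    | zero => simp
    | succ k ih => rw [pow_succ, mul_smul]; exact (Set.smul_set_mono hsub).trans ih
  obtain ⟨m, rfl⟩ := Nat.exists_eq_succ_of_ne_zero hn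
  refine hsub.antisymm ?_
  calc s = g • g ^ m • s := by rw [← mul_smul, ← pow_succ', hpow]
    _ ⊆ g • s := Set.smul_set_mono (hpow_sub m)

namespace MulAction

variable {G X : Type*} [Group G] [MulAction G X] {H : Subgroup G}

@[to_additive]
theorem orbit_subset_iUnion_smul_orbit_subgroup (x : X) :
    orbit G x ⊆ ⋃ q : G ⧸ H, q.out • orbit H x := by
  rintro _ ⟨g, rfl⟩
  obtain ⟨h, hh⟩ := QuotientGroup.mk_out_eq_mul H g
  refine Set.mem_iUnion.2 ⟨g, h⁻¹ • x, mem_orbit _ _, ?_⟩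
  simp only [hh, Subgroup.smul_def, Subgroup.coe_inv, smul_smul, mul_inv_cancel_right]

variable [TopologicalSpace X] [ContinuousConstSMul G X]

@[to_additive]
theorem interior_closure_orbit_subgroup_nonempty [BaireSpace X] [H.FiniteIndex] {x : X}
    (hx : Dense (orbit G x)) : (interior (closure (orbit H x))).Nonempty := by
  have : Nonempty X := ⟨x⟩
  have := Subgroup.finite_quotient_of_finiteIndex (H := H)
  have hclosed : ∀ q : G ⧸ H, IsClosed (q.out • closure (orbit H x)) :=
    fun q => isClosed_closure.smul _
  have hcover : ⋃ q : G ⧸ H, q.out • closure (orbit H x) = Set.univ := by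
    refine Set.eq_univ_of_univ_subset ?_
    calc Set.univ = closure (orbit G x) := hx.closure_eq.symm
      _ ⊆ closure (⋃ q : G ⧸ H, q.out • closure (orbit H x)) :=
        closure_mono <| (orbit_subset_iUnion_smul_orbit_subgroup x).trans <|
          Set.iUnion_mono fun _ => Set.smul_set_mono subset_closure
      _ = ⋃ q : G ⧸ H, q.out • closure (orbit H x) := (isClosed_iUnion_of_finite hclosed).closure_eq
  obtain ⟨q, hq⟩ := nonempty_interior_of_iUnion_of_closed hclosed hcover
  rwa [interior_smul, Set.smul_set_nonempty] at hq

variable [H.Normal]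

@[to_additive]
theorem smul_closure_orbit_subgroup (g : G) (x : X) :
    g • closure (orbit H x) = closure (orbit H (g • x)) := by
  rw [← closure_smul, smul_orbit_eq_orbit_smul]

@[to_additive]
theorem closure_orbit_subgroup_subset_of_mem {x y : X} (hy : y ∈ closure (orbit H x)) :
    closure (orbit H y) ⊆ closure (orbit H x) := by
  refine closure_minimal ?_ isClosed_closure
  rintro _ ⟨h, rfl⟩
  have hhy : (h : G) • y ∈ closure (orbit H ((h : G) • x)) := by
    rw [← smul_closure_orbit_subgroup]
    exact Set.smul_mem_smul_set hy
  rwa [← Subgroup.smul_def, orbit_smul] at hhy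

@[to_additive]
theorem smul_closure_orbit_subgroup_eq_of_smul_mem [H.FiniteIndex] {g : G} {x : X}
    (hg : g • x ∈ closure (orbit H x)) : g • closure (orbit H x) = closure (orbit H x) := by
  refine smul_set_eq_of_pow_smul_set_eq (Subgroup.FiniteIndex.index_ne_zero (H := H)) ?_ ?_
  · rw [smul_closure_orbit_subgroup]
    exact closure_orbit_subgroup_subset_of_mem hg
  · rw [smul_closure_orbit_subgroup,
      show g ^ H.index • x = (⟨g ^ H.index, H.pow_index_mem g⟩ : H) • x from rfl, orbit_smul]

variable [BaireSpace X] [H.FiniteIndex]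

@[to_additive]
theorem closure_orbit_subgroup_eq_of_mem {x y : X} (hx : Dense (orbit G x))
    (hy : Dense (orbit G y)) (hyx : y ∈ closure (orbit H x)) :
    closure (orbit H y) = closure (orbit H x) := by
  refine (closure_orbit_subgroup_subset_of_mem hyx).antisymm ?_
  obtain ⟨_, ⟨g, rfl⟩, hg⟩ :=
    hx.exists_mem_open isOpen_interior (interior_closure_orbit_subgroup_nonempty (H := H) hy)
  have hgy : g • x ∈ closure (orbit H y) := interior_subset hg
  calc closure (orbit H x)
      = g • closure (orbit H x) := (smul_closure_orbit_subgroup_eq_of_smul_mem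
        (closure_orbit_subgroup_subset_of_mem hyx hgy)).symm
    _ = closure (orbit H (g • x)) := smul_closure_orbit_subgroup g x
    _ ⊆ closure (orbit H y) := closure_orbit_subgroup_subset_of_mem hgy

@[to_additive]
theorem mem_interior_closure_orbit_subgroup {x y : X} (hx : Dense (orbit G x))
    (hy : Dense (orbit G y)) (hyx : y ∈ closure (orbit H x)) :
    y ∈ interior (closure (orbit H x)) := by
  rw [← closure_orbit_subgroup_eq_of_mem hx hy hyx]
  obtain ⟨_, ⟨g, rfl⟩, hg⟩ :=
    hy.exists_mem_open isOpen_interior (interior_closure_orbit_subgroup_nonempty (H := H) hy)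
  rw [← smul_closure_orbit_subgroup_eq_of_smul_mem (interior_subset hg), interior_smul] at hg
  exact Set.smul_mem_smul_set_iff.1 hg

@[to_additive]
theorem dense_orbit_subgroup_of_isPreconnected (hM : IsPreconnected {x : X | Dense (orbit G x)})
    {x : X} (hx : Dense (orbit G x)) : Dense (orbit H x) := by
  have hME : {x : X | Dense (orbit G x)} ⊆ interior (closure (orbit H x)) := by
    refine hM.subset_left_of_subset_union isOpen_interior isClosed_closure.isOpen_compl
      (disjoint_compl_right.mono_left interior_subset) (fun y hy => ?_)
      ⟨x, hx, mem_interior_closure_orbit_subgroup hx hx (subset_closure (mem_orbit_self x))⟩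
    by_cases hyx : y ∈ closure (orbit H x)
    · exact Or.inl (mem_interior_closure_orbit_subgroup hx hy hyx)
    · exact Or.inr hyx
  have horbit : orbit G x ⊆ {x : X | Dense (orbit G x)} := by
    rintro _ ⟨g, rfl⟩
    simpa only [Set.mem_ofPred_eq, orbit_smul] using hx
  exact dense_closure.1 (hx.mono (horbit.trans (hME.trans interior_subset)))

end MulAction

theorem AddAction.orbit_zmultiples {X : Type*} [AddAction ℤ X] (n : ℤ) (x : X) :
    orbit (AddSubgroup.zmultiples n) x = Set.range fun k : ℤ => (n * k) +ᵥ x := by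
  ext y
  simp only [orbit, Set.mem_range, Subtype.exists, AddSubgroup.mem_zmultiples_iff,
    AddSubgroup.vadd_def]
  constructor
  · rintro ⟨_, ⟨k, rfl⟩, rfl⟩
    exact ⟨k, by rw [smul_eq_mul, mul_comm]⟩
  · rintro ⟨k, rfl⟩
    exact ⟨_, ⟨k, rfl⟩, by rw [smul_eq_mul, mul_comm]⟩

namespace Homeomorph

variable {X : Type*} [TopologicalSpace X]

theorem toEquiv_zpow (f : X ≃ₜ X) (k : ℤ) : (f ^ k).toEquiv = f.toEquiv ^ k :=
  map_zpow (MonoidHom.mk' (toEquiv : (X ≃ₜ X) → Equiv.Perm X) fun _ _ => rfl) f k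

abbrev zpowAddAction (f : X ≃ₜ X) : AddAction ℤ X where
  vadd k x := (f.toEquiv ^ k) x
  zero_vadd _ := rfl
  add_vadd j k x := congrFun (congrArg DFunLike.coe (zpow_add f.toEquiv j k)) x

theorem continuousConstVAdd_zpowAddAction (f : X ≃ₜ X) :
    letI := f.zpowAddAction
    ContinuousConstVAdd ℤ X :=
  letI := f.zpowAddAction
  ⟨fun k => by
    change Continuous (f.toEquiv ^ k)
    simpa only [← toEquiv_zpow, coe_toEquiv] using (f ^ k).continuous⟩

end Homeomorph

theorem stmt7_general {X : Type*} [MetricSpace X] [LocallyCompactSpace X]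
    (f : X ≃ₜ X)
    (hconn : IsConnected {x : X | Dense (Set.range fun n : ℤ => (f.toEquiv ^ n) x)}) :
    ∀ n : ℕ, 1 ≤ n → ∀ x ∈ {x : X | Dense (Set.range fun m : ℤ => (f.toEquiv ^ m) x)},
      Dense (Set.range fun k : ℤ => (f.toEquiv ^ ((n : ℤ) * k)) x) := by
  intro n hn x hx
  let := f.zpowAddAction
  have := f.continuousConstVAdd_zpowAddAction
  have : (AddSubgroup.zmultiples (n : ℤ)).FiniteIndex :=
    ⟨by rw [Int.index_zmultiples, Int.natAbs_natCast]; omega⟩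
  have hdense := AddAction.dense_orbit_addSubgroup_of_isPreconnected
    (H := AddSubgroup.zmultiples (n : ℤ)) hconn.isPreconnected hx
  rwa [AddAction.orbit_zmultiples] at hdense

/-- If `f` is a pseudo-minimal homeomorphism of a locally compact, perfect, separable
metric space and the set `X_M` of points with dense orbit is connected, then every
power `f^n` (`n ≥ 1`) is minimal on `X_M`: each `x ∈ X_M` has dense `f^n`-orbit. -/
theorem stmt7 {X : Type*} [MetricSpace X] [LocallyCompactSpace X]
    [SecondCountableTopology X] [PerfectSpace X] (f : X ≃ₜ X)
    (hpm : ∃ U : Set X, IsOpen U ∧ U.Nonempty ∧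
      ∀ x ∈ U, Dense (Set.range fun n : ℤ => (f.toEquiv ^ n) x))
    (hconn : IsConnected {x : X | Dense (Set.range fun n : ℤ => (f.toEquiv ^ n) x)}) :
    ∀ n : ℕ, 1 ≤ n → ∀ x ∈ {x : X | Dense (Set.range fun m : ℤ => (f.toEquiv ^ m) x)},
      Dense (Set.range fun k : ℤ => (f.toEquiv ^ ((n : ℤ) * k)) x) :=
  stmt7_general f hconn
end
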